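/- arXiv:2209.06811 — 2 statements merged into one kernel-verified Lean document; each statement's English description precedes it below -/
import Mathlib

section
/- Let Δ > 0, ε > 0, and η ∈ (0, 1] with ε·η ≤ Δ, and set σ := min(0.9·Δ/√(2·ln(9Δ/(ε·η))), 0.2·Δ). Then |g_σ(0.9·Δ)| ≤ 0.1·ε·η/(√(2π)·σ³); equivalently, 0.9·Δ·exp(−(0.9·Δ)²/(2σ²)) ≤ 0.1·ε·η. -/
open Real

/-- The Gaussian derivative filter `g_σ(x) = −(1/(√(2π)·σ³))·x·exp(−x²/(2σ²))`. -/
noncomputable def gaussDerivFilter (σ x : ℝ) : ℝ :=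
  -(1 / (Real.sqrt (2 * π) * σ ^ 3)) * x * Real.exp (-(x ^ 2) / (2 * σ ^ 2))

theorem abs_gaussDerivFilter (σ x : ℝ) :
    |gaussDerivFilter σ x| = |x| * exp (-x ^ 2 / (2 * σ ^ 2)) / (√(2 * π) * |σ| ^ 3) := by
  rw [gaussDerivFilter, abs_mul, abs_mul, abs_neg, abs_of_pos (exp_pos _), abs_div, abs_one,
    abs_mul, abs_of_nonneg (sqrt_nonneg _), abs_pow, neg_div]
  ring

/-- Since `exp (-log (x / t)) = t / x`, the tail `x · exp (-x² / (2σ²))` drops below `t` as soon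
as `x² / (2σ²) ≥ log (x / t)`. -/
theorem mul_exp_neg_sq_div_le {x t σ : ℝ} (hx : 0 < x) (ht : 0 < t) (hσ : σ ≠ 0)
    (h : 2 * σ ^ 2 * log (x / t) ≤ x ^ 2) : x * exp (-x ^ 2 / (2 * σ ^ 2)) ≤ t := by
  have hlog : log (x / t) ≤ x ^ 2 / (2 * σ ^ 2) := by
    rw [le_div_iff₀ (by positivity)]
    linarith
  calc x * exp (-x ^ 2 / (2 * σ ^ 2)) ≤ x * exp (-log (x / t)) := by
        gcongr
        rw [neg_div]
        exact neg_le_neg hlog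
    _ = t := by
        rw [exp_neg, exp_log (by positivity), inv_div]
        field_simp

theorem sq_mul_le_sq_of_le_div_sqrt {σ a L : ℝ} (hσ : 0 ≤ σ) (hL : 0 < L) (h : σ ≤ a / √L) :
    σ ^ 2 * L ≤ a ^ 2 := by
  have hmul : σ * √L ≤ a := (le_div_iff₀ (sqrt_pos.2 hL)).1 h
  calc σ ^ 2 * L = (σ * √L) ^ 2 := by rw [mul_pow, sq_sqrt hL.le]
    _ ≤ a ^ 2 := pow_le_pow_left₀ (by positivity) hmul 2

theorem abs_gaussDerivFilter_at_gap_general (Δ ε η : ℝ) (hΔ : 0 < Δ) (hε : 0 < ε)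
    (hη0 : 0 < η) (hεη : ε * η ≤ Δ)
    (σ : ℝ)
    (hσ : σ = min (0.9 * Δ / Real.sqrt (2 * Real.log (9 * Δ / (ε * η)))) (0.2 * Δ)) :
    |gaussDerivFilter σ (0.9 * Δ)| ≤ 0.1 * ε * η / (Real.sqrt (2 * π) * σ ^ 3) ∧
    0.9 * Δ * Real.exp (-(0.9 * Δ) ^ 2 / (2 * σ ^ 2)) ≤ 0.1 * ε * η := by
  have hεη0 : 0 < ε * η := mul_pos hε hη0
  have hL : 0 < 2 * log (9 * Δ / (ε * η)) :=
    mul_pos two_pos (log_pos ((one_lt_div hεη0).2 (by linarith)))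
  have hσ0 : 0 < σ := hσ ▸ lt_min (div_pos (by positivity) (sqrt_pos.2 hL)) (by positivity)
  have hσL := sq_mul_le_sq_of_le_div_sqrt hσ0.le hL (hσ ▸ min_le_left _ _)
  have hratio : 0.9 * Δ / (0.1 * ε * η) = 9 * Δ / (ε * η) := by
    field_simp
    norm_num
  have key : 0.9 * Δ * exp (-(0.9 * Δ) ^ 2 / (2 * σ ^ 2)) ≤ 0.1 * ε * η :=
    mul_exp_neg_sq_div_le (by positivity) (by positivity) hσ0.ne' (by rw [hratio]; linarith)
  refine ⟨?_, key⟩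
  rw [abs_gaussDerivFilter, abs_of_pos (by positivity : (0 : ℝ) < 0.9 * Δ), abs_of_pos hσ0]
  exact div_le_div_of_nonneg_right key (by positivity)

/-- With `σ := min(0.9·Δ/√(2·ln(9Δ/(ε·η))), 0.2·Δ)`, the Gaussian derivative filter
satisfies `|g_σ(0.9·Δ)| ≤ 0.1·ε·η/(√(2π)·σ³)`, equivalently
`0.9·Δ·exp(−(0.9·Δ)²/(2σ²)) ≤ 0.1·ε·η`. -/
theorem abs_gaussDerivFilter_at_gap (Δ ε η : ℝ) (hΔ : 0 < Δ) (hε : 0 < ε)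
    (hη0 : 0 < η) (hη1 : η ≤ 1) (hεη : ε * η ≤ Δ)
    (σ : ℝ)
    (hσ : σ = min (0.9 * Δ / Real.sqrt (2 * Real.log (9 * Δ / (ε * η)))) (0.2 * Δ)) :
    |gaussDerivFilter σ (0.9 * Δ)| ≤ 0.1 * ε * η / (Real.sqrt (2 * π) * σ ^ 3) ∧
    0.9 * Δ * Real.exp (-(0.9 * Δ) ^ 2 / (2 * σ ^ 2)) ≤ 0.1 * ε * η :=
  abs_gaussDerivFilter_at_gap_general Δ ε η hΔ hε hη0 hεη σ hσ
end

section
/- Let c = √(2·ln(10/9)). Let Δ > 0, η ∈ (0, 1], N ≥ 1, weights p_0, …, p_{N−1} ≥ 0 with Σ_j p_j = 1 and p_0 ≥ η, and energies E_0 < E_1 ≤ … ≤ E_{N−1} with E_j − E_0 ≥ Δ for all 1 ≤ j ≤ N−1. Suppose ε > 0 satisfies ε ≤ c·min(0.9·Δ/√(2·ln(9Δ/(ε·η))), 0.2·Δ), and set σ := min(0.9·Δ/√(2·ln(9Δ/(ε·η))), 0.2·Δ). Then: (i) |(g_σ∗p)(x)| < 0.6·ε·p_0/(√(2π)·σ³)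 for every x ∈ [E_0 − 0.5ε, E_0 + 0.5ε]; and (ii) |(g_σ∗p)(x)| > 0.8·ε·p_0/(√(2π)·σ³) for every x ∈ [E_0 − 0.5σ, E_0 − ε) ∪ (E_0 + ε, E_0 + 0.5σ]. -/
/-!
Up to the factor `−1/(√(2π)σ³)`, the filter is the profile `f(t) = t·exp(−t²/(2σ²))`, which is
odd, strictly increasing on `[−σ, σ]` and decreasing on `[σ, ∞)`. The term of `E₀` dominates: it
is at most `p₀|x − E₀|` near `E₀`, and for `ε < |x − E₀| ≤ σ` at least `p₀ f(ε) ≥ 0.9 ε p₀`,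
because `ε ≤ √(2 ln(10/9)) σ` means `exp(−ε²/(2σ²)) ≥ 9/10`. Every other energy is at distance at
least `0.9Δ ≥ σ` from `x`, so its term is at most `f(0.9Δ) ≤ 0.1 εη`, which is what the choice
`σ ≤ 0.9Δ/√(2 ln(9Δ/(εη)))` guarantees; these terms carry total weight `1 − p₀`, and
`(1 − p₀)η < p₀`.
-/

open Real

open Set Finset

noncomputable def gaussProfile (σ t : ℝ) : ℝ :=
  t * exp (-(t ^ 2) / (2 * σ ^ 2))

lemma gaussDerivFilter_eq (σ x : ℝ) :
    gaussDerivFilter σ x = -(gaussProfile σ x / (√(2 * π) * σ ^ 3)) := by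
  unfold gaussDerivFilter gaussProfile
  ring

lemma abs_sum_mul_gaussDerivFilter {ι : Type*} [Fintype ι] (p E : ι → ℝ) {σ : ℝ}
    (hσ : 0 ≤ σ) (x : ℝ) : |∑ j, p j * gaussDerivFilter σ (x - E j)| =
      |∑ j, p j * gaussProfile σ (x - E j)| / (√(2 * π) * σ ^ 3) := by
  simp_rw [gaussDerivFilter_eq, mul_neg, sum_neg_distrib, abs_neg, mul_div_assoc', ← sum_div,
    abs_div, abs_of_nonneg (by positivity : 0 ≤ √(2 * π) * σ ^ 3)]

lemma abs_gaussProfile (σ t : ℝ) : |gaussProfile σ t| = gaussProfile σ |t| := by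
  rw [gaussProfile, gaussProfile, abs_mul, abs_of_pos (exp_pos _), sq_abs]

lemma abs_gaussProfile_le (σ t : ℝ) : |gaussProfile σ t| ≤ |t| := by
  rw [abs_gaussProfile, gaussProfile]
  refine mul_le_of_le_one_right (abs_nonneg t) (exp_le_one_iff.2 ?_)
  exact div_nonpos_of_nonpos_of_nonneg (neg_nonpos.2 (sq_nonneg _)) (by positivity)

lemma hasDerivAt_gaussProfile {σ : ℝ} (hσ : σ ≠ 0) (t : ℝ) :
    HasDerivAt (gaussProfile σ)
      ((σ ^ 2 - t ^ 2) / σ ^ 2 * exp (-(t ^ 2) / (2 * σ ^ 2))) t := by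
  have hexp : HasDerivAt (fun t => -(t ^ 2) / (2 * σ ^ 2)) (-(2 * t) / (2 * σ ^ 2)) t := by
    simpa using ((hasDerivAt_pow 2 t).neg).div_const (2 * σ ^ 2)
  refine ((hasDerivAt_id' t).mul hexp.exp).congr_deriv ?_
  field_simp
  ring

lemma strictMonoOn_gaussProfile {σ : ℝ} (hσ : 0 < σ) :
    StrictMonoOn (gaussProfile σ) (Icc (-σ) σ) := by
  have hderiv := hasDerivAt_gaussProfile hσ.ne'
  refine strictMonoOn_of_deriv_pos (convex_Icc _ _)
    (fun t _ => (hderiv t).continuousAt.continuousWithinAt) fun t ht => ?_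
  rw [interior_Icc] at ht
  have ht2 : t ^ 2 < σ ^ 2 := sq_lt_sq' ht.1 ht.2
  rw [(hderiv t).deriv]
  exact mul_pos (div_pos (by linarith) (by positivity)) (exp_pos _)

lemma antitoneOn_gaussProfile {σ : ℝ} (hσ : 0 < σ) :
    AntitoneOn (gaussProfile σ) (Ici σ) := by
  have hderiv := hasDerivAt_gaussProfile hσ.ne'
  refine antitoneOn_of_deriv_nonpos (convex_Ici _)
    (fun t _ => (hderiv t).continuousAt.continuousWithinAt)
    (fun t _ => (hderiv t).differentiableAt.differentiableWithinAt) fun t ht => ?_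
  rw [interior_Ici] at ht
  have ht2 : σ ^ 2 < t ^ 2 := by nlinarith [mem_Ioi.1 ht]
  rw [(hderiv t).deriv]
  exact mul_nonpos_of_nonpos_of_nonneg (div_nonpos_of_nonpos_of_nonneg (by linarith)
    (by positivity)) (exp_pos _).le

lemma exp_neg_sq_div_le_inv_iff {σ K a : ℝ} (hσ : σ ≠ 0) (hK : 0 < K) :
    exp (-(a ^ 2) / (2 * σ ^ 2)) ≤ K⁻¹ ↔ 2 * log K * σ ^ 2 ≤ a ^ 2 := by
  rw [← exp_log (inv_pos.2 hK), log_inv, exp_le_exp, neg_div, neg_le_neg_iff,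
    le_div_iff₀ (by positivity)]
  constructor <;> intro h <;> linarith

lemma inv_le_exp_neg_sq_div_iff {σ K a : ℝ} (hσ : σ ≠ 0) (hK : 0 < K) :
    K⁻¹ ≤ exp (-(a ^ 2) / (2 * σ ^ 2)) ↔ a ^ 2 ≤ 2 * log K * σ ^ 2 := by
  rw [← exp_log (inv_pos.2 hK), log_inv, exp_le_exp, neg_div, neg_le_neg_iff,
    div_le_iff₀ (by positivity)]
  constructor <;> intro h <;> linarith

lemma mul_sq_le_sq_of_le_div_sqrt {s σ a : ℝ} (hσ : 0 ≤ σ) (h : σ ≤ a / √s) :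
    s * σ ^ 2 ≤ a ^ 2 := by
  rcases le_or_gt s 0 with hs | hs
  · nlinarith [sq_nonneg σ, sq_nonneg a]
  · have hσa : σ * √s ≤ a := (le_div_iff₀ (sqrt_pos.2 hs)).1 h
    have := pow_le_pow_left₀ (by positivity) hσa 2
    rwa [mul_pow, sq_sqrt hs.le, mul_comm] at this

lemma gaussProfile_le_div {σ K a : ℝ} (hσ : 0 < σ) (hK : 0 < K) (ha : 0 ≤ a)
    (h : σ ≤ a / √(2 * log K)) : gaussProfile σ a ≤ a / K := by
  rw [gaussProfile, div_eq_mul_inv]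
  exact mul_le_mul_of_nonneg_left
    ((exp_neg_sq_div_le_inv_iff hσ.ne' hK).2 (mul_sq_le_sq_of_le_div_sqrt hσ.le h)) ha

lemma div_le_gaussProfile {σ K a : ℝ} (hσ : σ ≠ 0) (hK : 1 ≤ K) (ha : 0 ≤ a)
    (h : a ≤ √(2 * log K) * σ) : a / K ≤ gaussProfile σ a := by
  have hlog : 0 ≤ 2 * log K := by have := log_nonneg hK; linarith
  have hsq : a ^ 2 ≤ 2 * log K * σ ^ 2 := by
    have := pow_le_pow_left₀ ha h 2
    rwa [mul_pow, sq_sqrt hlog] at this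
  rw [gaussProfile, div_eq_mul_inv]
  exact mul_le_mul_of_nonneg_left
    ((inv_le_exp_neg_sq_div_iff hσ (by linarith)).2 hsq) ha

lemma abs_sum_mul_sub_le {ι : Type*} [Fintype ι] {p a : ι → ℝ} {B : ℝ}
    (hp : ∀ j, 0 ≤ p j) (hsum : ∑ j, p j = 1) (z : ι) (ha : ∀ j, j ≠ z → |a j| ≤ B) :
    |∑ j, p j * a j - p z * a z| ≤ (1 - p z) * B := by
  classical
  rw [← Finset.sum_erase_eq_sub (mem_univ z), ← hsum, ← Finset.sum_erase_eq_sub (mem_univ z),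
    Finset.sum_mul]
  refine (abs_sum_le_sum_abs _ _).trans (Finset.sum_le_sum fun j hj => ?_)
  rw [abs_mul, abs_of_nonneg (hp j)]
  exact mul_le_mul_of_nonneg_left (ha j (ne_of_mem_erase hj)) (hp j)

lemma abs_sum_gaussProfile_sub_le {ι : Type*} [Fintype ι] {p E : ι → ℝ} {σ d x B : ℝ}
    (hp : ∀ j, 0 ≤ p j) (hsum : ∑ j, p j = 1) (z : ι) (hσ : 0 < σ) (hσd : σ ≤ d)
    (hB : gaussProfile σ d ≤ B) (hgap : ∀ j, j ≠ z → x + d ≤ E j) :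
    |∑ j, p j * gaussProfile σ (x - E j) - p z * gaussProfile σ (x - E z)| ≤ (1 - p z) * B := by
  refine abs_sum_mul_sub_le hp hsum z fun j hj => ?_
  have hd : d ≤ |x - E j| := by rw [abs_sub_comm, abs_of_nonneg] <;> linarith [hgap j hj]
  rw [abs_gaussProfile]
  exact (antitoneOn_gaussProfile hσ hσd (hσd.trans hd) hd).trans hB

lemma abs_sum_gaussProfile_lt_of_near {ι : Type*} [Fintype ι] {p E : ι → ℝ}
    {σ d ε η x : ℝ} (hp : ∀ j, 0 ≤ p j) (hsum : ∑ j, p j = 1) (z : ι) (hη : 0 < η) (hpz : η ≤ p z)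
    (hε : 0 < ε) (hσ : 0 < σ) (hσd : σ ≤ d) (hfar : gaussProfile σ d ≤ 0.1 * (ε * η))
    (hgap : ∀ j, j ≠ z → x + d ≤ E j) (hx : |x - E z| ≤ 0.5 * ε) :
    |∑ j, p j * gaussProfile σ (x - E j)| < 0.6 * ε * p z := by
  have htail := abs_sum_gaussProfile_sub_le hp hsum z hσ hσd hfar hgap
  have hmain : p z * |gaussProfile σ (x - E z)| ≤ p z * (0.5 * ε) :=
    mul_le_mul_of_nonneg_left ((abs_gaussProfile_le _ _).trans hx) (hp z)
  have hsplit := abs_sub_abs_le_abs_sub (∑ j, p j * gaussProfile σ (x - E j))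
    (p z * gaussProfile σ (x - E z))
  rw [abs_mul, abs_of_nonneg (hp z)] at hsplit
  linarith [mul_pos hε (mul_pos (hη.trans_le hpz) hη), mul_le_mul_of_nonneg_left hpz hε.le]

lemma lt_abs_sum_gaussProfile_of_far {ι : Type*} [Fintype ι] {p E : ι → ℝ}
    {σ d ε η x : ℝ} (hp : ∀ j, 0 ≤ p j) (hsum : ∑ j, p j = 1) (z : ι) (hη : 0 < η) (hpz : η ≤ p z)
    (hε : 0 < ε) (hεσ : ε ≤ σ) (hσd : σ ≤ d) (hnear : 0.9 * ε ≤ gaussProfile σ ε)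
    (hfar : gaussProfile σ d ≤ 0.1 * (ε * η)) (hgap : ∀ j, j ≠ z → x + d ≤ E j)
    (hx : ε < |x - E z|) (hxσ : |x - E z| ≤ σ) :
    0.8 * ε * p z < |∑ j, p j * gaussProfile σ (x - E j)| := by
  have hσ : 0 < σ := hε.trans_le hεσ
  have hpz₀ : 0 < p z := hη.trans_le hpz
  have htail := abs_sum_gaussProfile_sub_le hp hsum z hσ hσd hfar hgap
  have hmono : gaussProfile σ ε < |gaussProfile σ (x - E z)| := by
    rw [abs_gaussProfile]
    exact strictMonoOn_gaussProfile hσ ⟨by linarith, hεσ⟩ ⟨by linarith, hxσ⟩ hx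
  have hsplit := abs_sub_abs_le_abs_sub (p z * gaussProfile σ (x - E z))
    (∑ j, p j * gaussProfile σ (x - E j))
  rw [abs_mul, abs_of_pos hpz₀, abs_sub_comm] at hsplit
  linarith [mul_lt_mul_of_pos_left hmono hpz₀, mul_le_mul_of_nonneg_left hnear hpz₀.le,
    mul_pos hε (mul_pos hpz₀ hη), mul_le_mul_of_nonneg_left hpz hε.le]

theorem gaussDerivConv_separation_general (Δ η : ℝ) (hΔ : 0 < Δ) (hη0 : 0 < η)
    (N : ℕ) (hN : 1 ≤ N) (p E : Fin N → ℝ)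
    (hp_nonneg : ∀ j, 0 ≤ p j) (hp_sum : ∑ j, p j = 1) (hp0 : η ≤ p ⟨0, hN⟩)
    (hE_gap : ∀ j : Fin N, 1 ≤ j.val → Δ ≤ E j - E ⟨0, hN⟩)
    (ε : ℝ) (hε : 0 < ε)
    (hε_small : ε ≤ Real.sqrt (2 * Real.log (10 / 9)) *
      min (0.9 * Δ / Real.sqrt (2 * Real.log (9 * Δ / (ε * η)))) (0.2 * Δ))
    (σ : ℝ)
    (hσ : σ = min (0.9 * Δ / Real.sqrt (2 * Real.log (9 * Δ / (ε * η)))) (0.2 * Δ)) :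
    (∀ x : ℝ, E ⟨0, hN⟩ - 0.5 * ε ≤ x → x ≤ E ⟨0, hN⟩ + 0.5 * ε →
      |∑ j, p j * gaussDerivFilter σ (x - E j)| <
        0.6 * ε * p ⟨0, hN⟩ / (Real.sqrt (2 * π) * σ ^ 3)) ∧
    (∀ x : ℝ, (E ⟨0, hN⟩ - 0.5 * σ ≤ x ∧ x < E ⟨0, hN⟩ - ε) ∨
        (E ⟨0, hN⟩ + ε < x ∧ x ≤ E ⟨0, hN⟩ + 0.5 * σ) →
      0.8 * ε * p ⟨0, hN⟩ / (Real.sqrt (2 * π) * σ ^ 3) <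
        |∑ j, p j * gaussDerivFilter σ (x - E j)|) := by
  set z : Fin N := ⟨0, hN⟩
  have hc : √(2 * log (10 / 9)) ≤ 1 :=
    sqrt_le_one.2 (by linarith [log_le_sub_one_of_pos (show (0 : ℝ) < 10 / 9 by norm_num)])
  have hεcσ : ε ≤ √(2 * log (10 / 9)) * σ := hσ ▸ hε_small
  have hσ0 : 0 < σ := pos_of_mul_pos_right (hε.trans_le hεcσ) (sqrt_nonneg _)
  have hεσ : ε ≤ σ := hεcσ.trans (mul_le_of_le_one_left hσ0.le hc)
  have hσΔ : σ ≤ 0.2 * Δ := hσ ▸ min_le_right _ _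
  have hnear : 0.9 * ε ≤ gaussProfile σ ε := by
    convert div_le_gaussProfile hσ0.ne' (by norm_num) hε.le hεcσ using 1
    ring
  have hfar : gaussProfile σ (0.9 * Δ) ≤ 0.1 * (ε * η) := by
    convert gaussProfile_le_div hσ0 (by positivity : 0 < 9 * Δ / (ε * η)) (by positivity)
      (hσ ▸ min_le_left _ _) using 1
    field_simp
    ring
  have hgap : ∀ x, x ≤ E z + 0.1 * Δ → ∀ j, j ≠ z → x + 0.9 * Δ ≤ E j :=
    fun x hx j hj => by linarith [hE_gap j (Nat.one_le_iff_ne_zero.2 fun h => hj (Fin.ext h))]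
  refine ⟨fun x hx₁ hx₂ => ?_, fun x hx => ?_⟩
  · rw [abs_sum_mul_gaussDerivFilter p E hσ0.le, div_lt_div_iff_of_pos_right (by positivity)]
    exact abs_sum_gaussProfile_lt_of_near hp_nonneg hp_sum z hη0 hp0 hε hσ0 (by linarith) hfar
      (hgap x (by linarith)) (abs_le.2 ⟨by linarith, by linarith⟩)
  · obtain ⟨hx₁, hx₂⟩ : ε < |x - E z| ∧ |x - E z| ≤ 0.5 * σ := by
      rcases hx with ⟨h₁, h₂⟩ | ⟨h₁, h₂⟩
      · rw [abs_of_neg (by linarith)]; constructor <;> linarith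
      · rw [abs_of_pos (by linarith)]; constructor <;> linarith
    rw [abs_sum_mul_gaussDerivFilter p E hσ0.le, div_lt_div_iff_of_pos_right (by positivity)]
    exact lt_abs_sum_gaussProfile_of_far hp_nonneg hp_sum z hη0 hp0 hε hεσ (by linarith) hnear
      hfar (hgap x (by linarith [le_abs_self (x - E z)])) hx₁ (by linarith)

/-- Separation properties of the convolution `(g_σ∗p)(x) = Σ_j p_j·g_σ(x − E_j)` of the
Gaussian derivative filter with the spectral measure: the convolution is small near `E_0`
and large away from `E_0` (within `[E_0 − 0.5σ, E_0 + 0.5σ]`). -/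
theorem gaussDerivConv_separation (Δ η : ℝ) (hΔ : 0 < Δ) (hη0 : 0 < η) (hη1 : η ≤ 1)
    (N : ℕ) (hN : 1 ≤ N) (p E : Fin N → ℝ)
    (hp_nonneg : ∀ j, 0 ≤ p j) (hp_sum : ∑ j, p j = 1) (hp0 : η ≤ p ⟨0, hN⟩)
    (hE_lt : ∀ j : Fin N, 1 ≤ j.val → E ⟨0, hN⟩ < E j)
    (hE_chain : ∀ i j : Fin N, 1 ≤ i.val → i ≤ j → E i ≤ E j)
    (hE_gap : ∀ j : Fin N, 1 ≤ j.val → Δ ≤ E j - E ⟨0, hN⟩)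
    (ε : ℝ) (hε : 0 < ε)
    (hε_small : ε ≤ Real.sqrt (2 * Real.log (10 / 9)) *
      min (0.9 * Δ / Real.sqrt (2 * Real.log (9 * Δ / (ε * η)))) (0.2 * Δ))
    (σ : ℝ)
    (hσ : σ = min (0.9 * Δ / Real.sqrt (2 * Real.log (9 * Δ / (ε * η)))) (0.2 * Δ)) :
    (∀ x : ℝ, E ⟨0, hN⟩ - 0.5 * ε ≤ x → x ≤ E ⟨0, hN⟩ + 0.5 * ε →
      |∑ j, p j * gaussDerivFilter σ (x - E j)| <
        0.6 * ε * p ⟨0, hN⟩ / (Real.sqrt (2 * π) * σ ^ 3)) ∧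
    (∀ x : ℝ, (E ⟨0, hN⟩ - 0.5 * σ ≤ x ∧ x < E ⟨0, hN⟩ - ε) ∨
        (E ⟨0, hN⟩ + ε < x ∧ x ≤ E ⟨0, hN⟩ + 0.5 * σ) →
      0.8 * ε * p ⟨0, hN⟩ / (Real.sqrt (2 * π) * σ ^ 3) <
        |∑ j, p j * gaussDerivFilter σ (x - E j)|) :=
  gaussDerivConv_separation_general Δ η hΔ hη0 N hN p E hp_nonneg hp_sum hp0 hE_gap ε hε hε_small σ
    hσ
end
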